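/- Let R = ℚ[q^{±1}, t^{±1}] and let I(n) be the ideal of R generated by the polynomials [n choose n-d]'_{q,t} for all divisors d of n. Then I(n) equals the product of the ideals I_{i,d} = (φ_d(q), q^i t + 1) over all divisors d of n and 0 ≤ i ≤ d-2, together with the principal ideal I_{n-1} = (q^{n-1} t + 1); moreover these ideals are pairwise comaximal. -/

import Mathlib

/-!
Write `h_e` for `[n choose n-e]'_{q,t}` with its last factor `1 + t q^(n-1)` removed, and `J` for
the ideal generated by the `h_e`, `e ∣ n`; then `I(n) = J · (q^(n-1) t + 1)`, and it remains to
show that `J` is the product `K` of the `I_{i,d}`.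

Every `h_e` lies in every `I_{i,d}`: if `d ∣ e`, then `q^(n-e) ≡ 1 mod φ_d` turns the factor
`1 + t q^(n-e+i)` into `q^i t + 1`; otherwise `φ_d` divides `[n choose n-e]_q`, as the
factorisation of Gaussian binomials into cyclotomic polynomials shows. As the `I_{i,d}` are
pairwise comaximal, `J ≤ K`. Conversely, modulo `φ_d` the generator `h_d` is a unit times
`∏_{i<d-1} (q^i t + 1)`, so `K ≤ J + (φ_d)` for every `d ∣ n`; since the `φ_d` are pairwise
coprime and `∏_{d ∣ n} φ_d = q^n - 1 = h_1 (q - 1) ∈ J`, the Chinese remainder theorem in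
`R ⧸ J` gives `K ≤ J`.

Comaximality: distinct cyclotomic polynomials are coprime, and `q^i t + 1`, `q^j t + 1` generate
`q^(j-i) - 1`, which is coprime to `φ_d` unless `d ∣ j - i`.
-/

open Polynomial Finset

/-- The q-analog `[m]_q = 1 + q + ⋯ + q^{m-1}` as a polynomial over `ℚ`. -/
noncomputable def qAnalog (m : ℕ) : Polynomial ℚ := ∑ i ∈ Finset.range m, X ^ i

/-- The q-factorial `[m]_q! = ∏_{i=1}^m [i]_q`. -/
noncomputable def qFactorial (m : ℕ) : Polynomial ℚ :=
  ∏ i ∈ Finset.range m, qAnalog (i + 1)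

/-- The Gaussian binomial coefficient `[n choose k]_q`. -/
noncomputable def qBinom (n k : ℕ) : Polynomial ℚ :=
  qFactorial n /ₘ (qFactorial k * qFactorial (n - k))

/-- The ring `R = ℚ[q^{±1}, t^{±1}]`, modelled as Laurent polynomials in `t` with
coefficients Laurent polynomials in `q`. -/
noncomputable abbrev LaurentQT : Type := LaurentPolynomial (LaurentPolynomial ℚ)

/-- The variable `q` of `R = ℚ[q^{±1}, t^{±1}]`. -/
noncomputable def qv : LaurentQT := LaurentPolynomial.C (LaurentPolynomial.T 1)

/-- The variable `t` of `R = ℚ[q^{±1}, t^{±1}]`. -/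
noncomputable def tv : LaurentQT := LaurentPolynomial.T 1

/-- The (q,t)-binomial `[n choose i]'_{q,t} = [n choose i]_q · ∏_{j=i}^{n-1}(1 + t q^j)`. -/
noncomputable def qtBinom' (n i : ℕ) : LaurentQT :=
  aeval qv (qBinom n i) * ∏ j ∈ Finset.Ico i n, (1 + tv * qv ^ j)

/-- The ideal `I_{i,d} = (φ_d(q), q^i t + 1)`. -/
noncomputable def idealId (d i : ℕ) : Ideal LaurentQT :=
  Ideal.span {(aeval qv (cyclotomic d ℚ) : LaurentQT), qv ^ i * tv + 1}

lemma qAnalog_eq_prod_cyclotomic {m : ℕ} (hm : 0 < m) :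
    qAnalog m = ∏ c ∈ m.divisors.erase 1, cyclotomic c ℚ :=
  (prod_cyclotomic_eq_geom_sum hm ℚ).symm

lemma qFactorial_succ (m : ℕ) : qFactorial (m + 1) = qFactorial m * qAnalog (m + 1) :=
  prod_range_succ _ _

lemma qFactorial_monic (m : ℕ) : (qFactorial m).Monic :=
  monic_prod_of_monic _ _ fun i _ => by
    rw [qAnalog_eq_prod_cyclotomic i.succ_pos]
    exact monic_prod_of_monic _ _ fun c _ => cyclotomic.monic c ℚ

lemma qFactorial_eq_prod_cyclotomic {m N : ℕ} (h : m ≤ N) :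
    qFactorial m = ∏ c ∈ Icc 2 N, cyclotomic c ℚ ^ (m / c) := by
  induction m with
  | zero => simp [qFactorial]
  | succ m ih =>
    have hdivisors : (Icc 2 N).filter (· ∣ m + 1) = (m + 1).divisors.erase 1 := by
      ext c
      simp only [mem_filter, mem_Icc, mem_erase, Nat.mem_divisors]
      constructor
      · rintro ⟨⟨h2, -⟩, hc⟩
        exact ⟨by omega, hc, m.succ_ne_zero⟩
      · rintro ⟨h1, hc, -⟩
        have := Nat.le_of_dvd m.succ_pos hc
        have := Nat.pos_of_dvd_of_pos hc m.succ_pos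
        exact ⟨⟨by omega, by omega⟩, hc⟩
    rw [qFactorial_succ, ih (by omega), qAnalog_eq_prod_cyclotomic m.succ_pos, ← hdivisors,
      prod_filter, ← prod_mul_distrib]
    refine prod_congr rfl fun c _ => ?_
    rw [Nat.succ_div]
    split_ifs <;> simp [pow_succ]

lemma qBinom_eq_prod_cyclotomic {n k : ℕ} (hk : k ≤ n) :
    qBinom n k = ∏ c ∈ Icc 2 n, cyclotomic c ℚ ^ (n / c - k / c - (n - k) / c) := by
  have hfactorial : qFactorial n = qFactorial k * qFactorial (n - k) *
      ∏ c ∈ Icc 2 n, cyclotomic c ℚ ^ (n / c - k / c - (n - k) / c) := by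
    rw [qFactorial_eq_prod_cyclotomic le_rfl, qFactorial_eq_prod_cyclotomic hk,
      qFactorial_eq_prod_cyclotomic (n.sub_le k), ← prod_mul_distrib, ← prod_mul_distrib]
    refine prod_congr rfl fun c _ => ?_
    have := Nat.div_add_div_le_add_div (x := k) (y := n - k) (z := c)
    rw [Nat.add_sub_cancel' hk] at this
    rw [← pow_add, ← pow_add]
    congr 1
    omega
  rw [qBinom, hfactorial,
    mul_divByMonic_cancel_left _ ((qFactorial_monic k).mul (qFactorial_monic _))]

lemma qBinom_sub_one {n : ℕ} (hn : 0 < n) : qBinom n (n - 1) = qAnalog n := by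
  obtain ⟨m, rfl⟩ : ∃ m, n = m + 1 := ⟨n - 1, by omega⟩
  have h1 : qFactorial 1 = 1 := by simp [qFactorial, qAnalog]
  rw [qBinom, Nat.add_sub_cancel, Nat.add_sub_cancel_left, qFactorial_succ, h1, mul_one,
    mul_divByMonic_cancel_left _ (qFactorial_monic m)]

lemma cyclotomic_dvd_qBinom {n k d : ℕ} (hk : k ≤ n) (hdn : d ∣ n) (hdk : ¬ d ∣ k) :
    cyclotomic d ℚ ∣ qBinom n k := by
  have hn : 0 < n := Nat.pos_of_ne_zero fun h => hdk (by
    subst h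
    rw [Nat.le_zero.1 hk]
    exact dvd_zero d)
  have hd : 0 < d := Nat.pos_of_dvd_of_pos hdn hn
  have hd1 : d ≠ 1 := by rintro rfl; exact hdk (one_dvd k)
  have hmod_pos : 0 < k % d := Nat.pos_of_ne_zero (mt Nat.dvd_of_mod_eq_zero hdk)
  have hmod_dvd : d ∣ k % d + (n - k) % d := by
    rw [Nat.dvd_iff_mod_eq_zero, ← Nat.add_mod, Nat.add_sub_cancel' hk]
    exact Nat.mod_eq_zero_of_dvd hdn
  have hcarry := Nat.add_div_eq_of_le_mod_add_mod (Nat.le_of_dvd (by omega) hmod_dvd) hd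
  rw [Nat.add_sub_cancel' hk] at hcarry
  rw [qBinom_eq_prod_cyclotomic hk]
  refine dvd_trans ?_ (dvd_prod_of_mem _ (mem_Icc.2 ⟨by omega, Nat.le_of_dvd hn hdn⟩))
  rw [show n / d - k / d - (n - k) / d = 1 by omega, pow_one]

lemma isCoprime_cyclotomic_qBinom {n k d : ℕ} (hk : k ≤ n) (hdk : d ∣ k) :
    IsCoprime (cyclotomic d ℚ) (qBinom n k) := by
  rw [qBinom_eq_prod_cyclotomic hk]
  refine IsCoprime.prod_right fun c _ => ?_
  by_cases hcd : d = c
  · subst hcd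
    have := Nat.add_div_of_dvd_right (b := n - k) hdk
    rw [Nat.add_sub_cancel' hk] at this
    rw [this, show k / d + (n - k) / d - k / d - (n - k) / d = 0 by omega, pow_zero]
    exact isCoprime_one_right
  · exact (cyclotomic.isCoprime_rat hcd).pow_right

lemma isCoprime_cyclotomic_X_pow_sub_one {d k : ℕ} (hdk : ¬ d ∣ k) :
    IsCoprime (cyclotomic d ℚ) (X ^ k - 1) := by
  have hk : 0 < k := Nat.pos_of_ne_zero fun h => hdk (h ▸ dvd_zero d)
  rw [← prod_cyclotomic_eq_X_pow_sub_one hk]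
  exact IsCoprime.prod_right fun c hc =>
    cyclotomic.isCoprime_rat fun h => hdk (h ▸ Nat.dvd_of_mem_divisors hc)

namespace Ideal

variable {R ι : Type*} [CommRing R]

theorem eq_top_of_isCoprime_of_mem {I : Ideal R} {x y : R} (h : IsCoprime x y) (hx : x ∈ I)
    (hy : y ∈ I) : I = ⊤ := by
  obtain ⟨a, b, hab⟩ := h
  exact (eq_top_iff_one I).2 (hab ▸ I.add_mem (I.mul_mem_left a hx) (I.mul_mem_left b hy))

theorem sup_span_singleton_mul_le (I : Ideal R) (x y : R) :
    (I ⊔ span {x}) * (I ⊔ span {y}) ≤ I ⊔ span {x * y} := by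
  rw [mul_sup, sup_mul, sup_mul, span_singleton_mul_span_singleton]
  exact sup_le (sup_le (mul_le_left.trans le_sup_left) (mul_le_right.trans le_sup_left))
    (sup_le (mul_le_left.trans le_sup_left) le_sup_right)

theorem prod_sup_span_singleton_le (I : Ideal R) (s : Finset ι) (g : ι → R) :
    ∏ i ∈ s, (I ⊔ span {g i}) ≤ I ⊔ span {∏ i ∈ s, g i} := by
  classical
  induction s using Finset.induction_on with
  | empty => simp
  | insert a s ha ih =>
    rw [prod_insert ha, prod_insert ha]
    exact (mul_mono_right ih).trans (sup_span_singleton_mul_le I _ _)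

theorem mem_sup_span_singleton_of_isCoprime {J : Ideal R} {u φ x y : R} (hu : IsCoprime u φ)
    (hx : u * x ∈ J) (hxy : x - y ∈ span {φ}) : y ∈ J ⊔ span {φ} := by
  obtain ⟨a, b, hab⟩ := hu
  obtain ⟨c, hc⟩ := mem_span_singleton'.1 hxy
  have hy : y = a * (u * x) + (b * y - a * u * c) * φ := by
    linear_combination (-y) * hab + a * u * hc
  rw [hy]
  exact add_mem (mem_sup_left (J.mul_mem_left a hx))
    (mem_sup_right (mem_span_singleton'.2 ⟨_, rfl⟩))

theorem mem_of_forall_mem_sup_span_singleton {J : Ideal R} {s : Finset ι} {φ : ι → R}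
    (hφ : (s : Set ι).Pairwise (Function.onFun IsCoprime φ)) (hprod : ∏ i ∈ s, φ i ∈ J)
    {f : R} (hf : ∀ i ∈ s, f ∈ J ⊔ span {φ i}) : f ∈ J := by
  have hdvd : ∀ i ∈ s, Quotient.mk J (φ i) ∣ Quotient.mk J f := fun i hi => by
    obtain ⟨j, hj, y, hy, rfl⟩ := Submodule.mem_sup.1 (hf i hi)
    obtain ⟨c, rfl⟩ := mem_span_singleton'.1 hy
    exact ⟨Quotient.mk J c, by simp [Quotient.eq_zero_iff_mem.2 hj, mul_comm]⟩
  have := Finset.prod_dvd_of_coprime (fun i hi j hj hij => (hφ hi hj hij).map (Quotient.mk J)) hdvd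
  rwa [← map_prod, Quotient.eq_zero_iff_mem.2 hprod, zero_dvd_iff, Quotient.eq_zero_iff_mem]
    at this

end Ideal

lemma isCoprime_aeval_qv {p r : ℚ[X]} (h : IsCoprime p r) :
    IsCoprime (aeval qv p : LaurentQT) (aeval qv r) :=
  h.map (aeval qv : ℚ[X] →ₐ[ℚ] LaurentQT).toRingHom

lemma qv_pow_sub_one_mem_span_cyclotomic {d m : ℕ} (hdm : d ∣ m) :
    qv ^ m - 1 ∈ Ideal.span {(aeval qv (cyclotomic d ℚ) : LaurentQT)} := by
  obtain ⟨k, rfl⟩ := hdm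
  have h1 : (aeval qv (cyclotomic d ℚ) : LaurentQT) ∣ qv ^ d - 1 := by
    simpa using map_dvd (aeval qv) (cyclotomic.dvd_X_pow_sub_one d ℚ)
  have h2 : (qv ^ d - 1 : LaurentQT) ∣ qv ^ (d * k) - 1 := by
    simpa [pow_mul] using sub_dvd_pow_sub_pow (qv ^ d : LaurentQT) 1 k
  exact Ideal.mem_span_singleton.2 (h1.trans h2)

lemma one_add_tv_mul_qv_pow_sub_mem_span {d m : ℕ} (hdm : d ∣ m) (i : ℕ) :
    (1 + tv * qv ^ (m + i)) - (qv ^ i * tv + 1) ∈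
      Ideal.span {(aeval qv (cyclotomic d ℚ) : LaurentQT)} := by
  rw [show (1 + tv * qv ^ (m + i)) - (qv ^ i * tv + 1) = tv * qv ^ i * (qv ^ m - 1) by ring]
  exact Ideal.mul_mem_left _ _ (qv_pow_sub_one_mem_span_cyclotomic hdm)

lemma idealId_eq_sup (d i : ℕ) :
    idealId d i = Ideal.span {(aeval qv (cyclotomic d ℚ) : LaurentQT)} ⊔
      Ideal.span {qv ^ i * tv + 1} :=
  Ideal.span_insert _ _

lemma cyclotomic_mem_idealId (d i : ℕ) :
    (aeval qv (cyclotomic d ℚ) : LaurentQT) ∈ idealId d i :=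
  Ideal.subset_span (Set.mem_insert _ _)

lemma qv_pow_mul_tv_add_one_mem_idealId (d i : ℕ) : qv ^ i * tv + 1 ∈ idealId d i :=
  Ideal.subset_span (Set.mem_insert_of_mem _ rfl)

lemma one_add_tv_mul_qv_pow_mem_idealId {d m : ℕ} (hdm : d ∣ m) (i : ℕ) :
    1 + tv * qv ^ (m + i) ∈ idealId d i := by
  rw [idealId_eq_sup]
  simpa using Submodule.add_mem_sup (one_add_tv_mul_qv_pow_sub_mem_span hdm i)
    (Ideal.mem_span_singleton_self (qv ^ i * tv + 1))

lemma idealId_sup_span_eq_top {d k : ℕ} (hdk : ¬ d ∣ k) (i : ℕ) :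
    idealId d i ⊔ Ideal.span {qv ^ (i + k) * tv + 1} = ⊤ := by
  refine Ideal.eq_top_of_isCoprime_of_mem
    (isCoprime_aeval_qv (isCoprime_cyclotomic_X_pow_sub_one hdk))
    (Ideal.mem_sup_left (cyclotomic_mem_idealId d i)) ?_
  have hdiff : (aeval qv (X ^ k - 1 : ℚ[X]) : LaurentQT) =
      qv ^ k * (qv ^ i * tv + 1) - (qv ^ (i + k) * tv + 1) := by
    simp only [map_sub, map_pow, aeval_X, map_one]
    ring
  rw [hdiff]
  exact sub_mem
    (Ideal.mem_sup_left (Ideal.mul_mem_left _ _ (qv_pow_mul_tv_add_one_mem_idealId d i)))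
    (Ideal.mem_sup_right (Ideal.mem_span_singleton_self _))

lemma idealId_sup_idealId_eq_top {d d' i i' : ℕ} (hi : i < d - 1) (hi' : i' < d' - 1)
    (hne : (d, i) ≠ (d', i')) : idealId d i ⊔ idealId d' i' = ⊤ := by
  obtain rfl | hdd := eq_or_ne d d'
  · wlog hlt : i < i' generalizing i i'
    · rw [sup_comm]
      exact this hi' hi hne.symm (by grind)
    obtain ⟨k, rfl⟩ := Nat.exists_eq_add_of_lt hlt
    refine eq_top_iff.2 ((idealId_sup_span_eq_top (k := k + 1) ?_ i).symm.le.trans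
      (sup_le_sup_left ?_ _))
    · exact Nat.not_dvd_of_pos_of_lt k.succ_pos (by omega)
    · exact (Ideal.span_singleton_le_iff_mem _).2 (qv_pow_mul_tv_add_one_mem_idealId d _)
  · exact Ideal.eq_top_of_isCoprime_of_mem (isCoprime_aeval_qv (cyclotomic.isCoprime_rat hdd))
      (Ideal.mem_sup_left (cyclotomic_mem_idealId d i))
      (Ideal.mem_sup_right (cyclotomic_mem_idealId d' i'))

noncomputable def qtBinomCofactor (n e : ℕ) : LaurentQT :=
  aeval qv (qBinom n (n - e)) * ∏ i ∈ range (e - 1), (1 + tv * qv ^ (n - e + i))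

noncomputable def qtBinomCofactorIdeal (n : ℕ) : Ideal LaurentQT :=
  Ideal.span (qtBinomCofactor n '' {e | e ∣ n})

lemma qtBinom'_sub_eq_qtBinomCofactor_mul {n e : ℕ} (he : 0 < e) (hen : e ≤ n) :
    qtBinom' n (n - e) = qtBinomCofactor n e * (qv ^ (n - 1) * tv + 1) := by
  rw [qtBinom', qtBinomCofactor, prod_Ico_eq_prod_range, show n - (n - e) = e - 1 + 1 by omega,
    prod_range_succ, show n - e + (e - 1) = n - 1 by omega]
  ring

lemma span_qtBinom'_eq_qtBinomCofactorIdeal_mul {n : ℕ} (hn : 0 < n) :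
    Ideal.span ((fun d => qtBinom' n (n - d)) '' {d : ℕ | d ∣ n}) =
      qtBinomCofactorIdeal n * Ideal.span {qv ^ (n - 1) * tv + 1} := by
  rw [qtBinomCofactorIdeal, Ideal.span_mul_span', Set.mul_singleton, Set.image_image]
  exact congrArg _ (Set.image_congr fun e he =>
    qtBinom'_sub_eq_qtBinomCofactor_mul (Nat.pos_of_dvd_of_pos he hn) (Nat.le_of_dvd hn he))

lemma qtBinomCofactor_mem_idealId {n e d i : ℕ} (hn : 0 < n) (he : e ∣ n) (hd : d ∣ n)
    (hi : i < d - 1) : qtBinomCofactor n e ∈ idealId d i := by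
  have hen : e ≤ n := Nat.le_of_dvd hn he
  by_cases hde : d ∣ e
  · have hie : i ∈ range (e - 1) := by
      have := Nat.le_of_dvd (Nat.pos_of_dvd_of_pos he hn) hde
      exact mem_range.2 (by omega)
    rw [qtBinomCofactor, ← mul_prod_erase _ _ hie]
    exact Ideal.mul_mem_left _ _ (Ideal.mul_mem_right _ _
      (one_add_tv_mul_qv_pow_mem_idealId (Nat.dvd_sub hd hde) i))
  · have hdk : ¬ d ∣ n - e := fun h =>
      hde (by simpa [Nat.sub_sub_self hen] using Nat.dvd_sub hd h)
    obtain ⟨c, hc⟩ := cyclotomic_dvd_qBinom (n.sub_le e) hd hdk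
    rw [qtBinomCofactor, hc, map_mul, mul_assoc]
    exact Ideal.mul_mem_right _ _ (cyclotomic_mem_idealId d i)

lemma qv_pow_sub_one_mem_qtBinomCofactorIdeal {n : ℕ} (hn : 0 < n) :
    qv ^ n - 1 ∈ qtBinomCofactorIdeal n := by
  have h : qv ^ n - 1 = qtBinomCofactor n 1 * (qv - 1) := by
    rw [qtBinomCofactor, qBinom_sub_one hn, Nat.sub_self, range_zero, prod_empty, mul_one, qAnalog]
    simpa using (congrArg (aeval qv) (geom_sum_mul (X : ℚ[X]) n)).symm
  rw [h]
  exact Ideal.mul_mem_right _ _ (Ideal.subset_span ⟨1, one_dvd n, rfl⟩)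

/-- Modulo `φ_d(q)`, `q^(n-d) = 1`, so the cofactor for `e = d` is a unit times
`∏_{i < d-1} (q^i t + 1)`. -/
lemma prod_qv_pow_mul_tv_add_one_mem_sup {n d : ℕ} (hd : d ∣ n) :
    ∏ i ∈ range (d - 1), (qv ^ i * tv + 1) ∈
      qtBinomCofactorIdeal n ⊔ Ideal.span {(aeval qv (cyclotomic d ℚ) : LaurentQT)} := by
  have hdk : d ∣ n - d := Nat.dvd_sub hd dvd_rfl
  refine Ideal.mem_sup_span_singleton_of_isCoprime
    (isCoprime_aeval_qv (isCoprime_cyclotomic_qBinom (n.sub_le d) hdk)).symm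
    (Ideal.subset_span ⟨d, hd, rfl⟩) ?_
  rw [← Ideal.Quotient.eq, map_prod, map_prod]
  exact prod_congr rfl fun i _ => Ideal.Quotient.eq.2 (one_add_tv_mul_qv_pow_sub_mem_span hdk i)

lemma prod_idealId_le_sup {n d : ℕ} (hd : d ∣ n) :
    ∏ i ∈ range (d - 1), idealId d i ≤
      qtBinomCofactorIdeal n ⊔ Ideal.span {(aeval qv (cyclotomic d ℚ) : LaurentQT)} := by
  simp_rw [idealId_eq_sup]
  exact (Ideal.prod_sup_span_singleton_le _ _ _).trans (sup_le le_sup_right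
    ((Ideal.span_singleton_le_iff_mem _).2 (prod_qv_pow_mul_tv_add_one_mem_sup hd)))

lemma prod_prod_idealId_eq_iInf (n : ℕ) :
    ∏ d ∈ n.divisors, ∏ i ∈ range (d - 1), idealId d i =
      ⨅ p ∈ n.divisors.sigma fun d => range (d - 1), idealId p.1 p.2 := by
  rw [prod_sigma']
  refine Ideal.prod_eq_iInf_of_pairwise_isCoprime fun ⟨d, i⟩ hp ⟨d', i'⟩ hp' hne => ?_
  simp only [coe_sigma, Set.mem_sigma_iff, mem_coe, mem_range] at hp hp'
  exact Ideal.isCoprime_iff_sup_eq.2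
    (idealId_sup_idealId_eq_top hp.2 hp'.2 fun h => hne (by cases h; rfl))

lemma qtBinomCofactorIdeal_eq_prod {n : ℕ} (hn : 0 < n) :
    qtBinomCofactorIdeal n = ∏ d ∈ n.divisors, ∏ i ∈ range (d - 1), idealId d i := by
  refine le_antisymm ?_ fun f hf => ?_
  · rw [qtBinomCofactorIdeal, Ideal.span_le, prod_prod_idealId_eq_iInf]
    rintro _ ⟨e, he, rfl⟩
    simp only [SetLike.mem_coe, Submodule.mem_iInf, mem_sigma, Nat.mem_divisors, mem_range]
    rintro ⟨d, i⟩ ⟨⟨hd, -⟩, hi⟩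
    exact qtBinomCofactor_mem_idealId hn he hd hi
  · refine Ideal.mem_of_forall_mem_sup_span_singleton
      (s := n.divisors) (φ := fun d => (aeval qv (cyclotomic d ℚ) : LaurentQT))
      (fun d _ d' _ h => isCoprime_aeval_qv (cyclotomic.isCoprime_rat h)) ?_ fun d hd => ?_
    · rw [← map_prod, prod_cyclotomic_eq_X_pow_sub_one hn]
      simpa using qv_pow_sub_one_mem_qtBinomCofactorIdeal hn
    · exact prod_idealId_le_sup (Nat.dvd_of_mem_divisors hd)
        (Ideal.prod_le_inf.trans (inf_le hd) hf)

/-- The ideal `I(n)` generated by `[n choose n-d]'_{q,t}` for all divisors `d` of `n` equals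
the product of the ideals `I_{i,d} = (φ_d(q), q^i t + 1)` over `d ∣ n`, `0 ≤ i ≤ d-2`,
together with `I_{n-1} = (q^{n-1} t + 1)`; moreover all these ideals are pairwise
comaximal. -/
theorem stmt_11 (n : ℕ) (hn : 0 < n) :
    (Ideal.span ((fun d => qtBinom' n (n - d)) '' {d : ℕ | d ∣ n}) =
      (∏ d ∈ n.divisors, ∏ i ∈ Finset.range (d - 1), idealId d i) *
        Ideal.span {(qv ^ (n - 1) * tv + 1 : LaurentQT)}) ∧
    (∀ d ∈ n.divisors, ∀ d' ∈ n.divisors, ∀ i < d - 1, ∀ i' < d' - 1,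
      (d, i) ≠ (d', i') → idealId d i ⊔ idealId d' i' = ⊤) ∧
    (∀ d ∈ n.divisors, ∀ i < d - 1,
      idealId d i ⊔ Ideal.span {(qv ^ (n - 1) * tv + 1 : LaurentQT)} = ⊤) := by
  refine ⟨by rw [span_qtBinom'_eq_qtBinomCofactorIdeal_mul hn, qtBinomCofactorIdeal_eq_prod hn],
    fun d _ d' _ i hi i' hi' hne => idealId_sup_idealId_eq_top hi hi' hne, fun d hd i hi => ?_⟩
  have hdn : d ∣ n := Nat.dvd_of_mem_divisors hd
  have hdle : d ≤ n := Nat.le_of_dvd hn hdn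
  have hdk : ¬ d ∣ n - 1 - i := fun h => by
    have := Nat.dvd_sub hdn h
    rw [show n - (n - 1 - i) = i + 1 by omega] at this
    exact Nat.not_dvd_of_pos_of_lt i.succ_pos (by omega) this
  simpa [show i + (n - 1 - i) = n - 1 by omega] using idealId_sup_span_eq_top hdk i
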